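/- Spectral filter difference bound on graphs: Let S̄_n, S_n ∈ ℝ^{n×n} be symmetric matrices with orthonormal eigenpairs (λ̄_i, v̄_i) and (λ_i, v_i). Let h : ℝ → ℝ be A₂-Lipschitz with |h| < 1 and h(λ) = 0 for |λ| < c. Suppose |λ̄_i − λ_i| ≤ ‖S̄_n − S_n‖ for all i (Weyl), and that for each i in the passband of S_n, ‖v̄_i − v_i‖ ≤ π‖S̄_n − S_n‖/(n δ_c) where δ_c is a lower bound on the normalized eigengaps. Then for every x ∈ ℝⁿ, ‖H(S̄_n)x − H(S_n)x‖ ≤ (A₂ + π n_c/δ_c) (‖S̄_n − S_n‖/n) ‖x‖, where H(S)x = Σ_i h(λ_i(S)/n)⟨x, v_i⟩v_i and n_c is the number of eigenvalues λ_i of S_n with |λ_i/n| ≥ c. -/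

import Mathlib

/-!
Split `H(S̄)x − H(S)x` into `∑ (h(λ̄ᵢ/n) − h(λᵢ/n)) ⟪x, v̄ᵢ⟫ v̄ᵢ`, a diagonal operator in the
orthonormal family `v̄` whose entries are at most `A₂‖S̄ − S‖/n` by Lipschitz continuity and
Weyl's bound, plus `∑ h(λᵢ/n) (⟪x, v̄ᵢ⟫ v̄ᵢ − ⟪x, vᵢ⟫ vᵢ)`, where only the `n_c` passband terms
survive and each is controlled by `‖v̄ᵢ − vᵢ‖ ‖x‖` since `|h| ≤ 1`.
-/
open Finset
open scoped RealInnerProductSpace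

section

variable {E : Type*} [NormedAddCommGroup E] [InnerProductSpace ℝ E]

/-- This is the nonnegativity of the Gram determinant of `(x, u, w)`. -/
theorem gram_det_nonneg_of_norm_eq_one {u w : E} (hu : ‖u‖ = 1) (hw : ‖w‖ = 1) (x : E) :
    ⟪x, u⟫ ^ 2 + ⟪x, w⟫ ^ 2 - 2 * ⟪x, u⟫ * ⟪x, w⟫ * ⟪u, w⟫ ≤ (1 - ⟪u, w⟫ ^ 2) * ‖x‖ ^ 2 := by
  have hdet := (Matrix.posSemidef_gram ℝ ![x, u, w]).det_nonneg
  simp only [Matrix.det_fin_three, Matrix.gram_apply, Matrix.cons_val_zero, Matrix.cons_val_one,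
    Matrix.cons_val, inner_self_eq_norm_sq_to_K, Real.ringHom_apply, hu, hw, one_pow, mul_one,
    real_inner_comm u w, real_inner_comm x] at hdet
  linarith

/-- The difference of the rank-one projections onto unit vectors `u`, `w` has operator norm
`sin ∠(u, w) ≤ ‖u - w‖`. -/
theorem norm_inner_smul_sub_inner_smul_le {u w : E} (hu : ‖u‖ = 1) (hw : ‖w‖ = 1) (x : E) :
    ‖⟪x, u⟫ • u - ⟪x, w⟫ • w‖ ≤ ‖u - w‖ * ‖x‖ := by
  refine le_of_sq_le_sq ?_ (by positivity)
  calc ‖⟪x, u⟫ • u - ⟪x, w⟫ • w‖ ^ 2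
      = ⟪x, u⟫ ^ 2 + ⟪x, w⟫ ^ 2 - 2 * ⟪x, u⟫ * ⟪x, w⟫ * ⟪u, w⟫ := by
        rw [norm_sub_sq_real, norm_smul, norm_smul, real_inner_smul_left, real_inner_smul_right,
          hu, hw, Real.norm_eq_abs, Real.norm_eq_abs, mul_one, mul_one, sq_abs, sq_abs]
        ring
    _ ≤ (1 - ⟪u, w⟫ ^ 2) * ‖x‖ ^ 2 := gram_det_nonneg_of_norm_eq_one hu hw x
    _ ≤ (2 - 2 * ⟪u, w⟫) * ‖x‖ ^ 2 := by
        gcongr ?_ * _; nlinarith [sq_nonneg (1 - ⟪u, w⟫)]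
    _ = (‖u - w‖ * ‖x‖) ^ 2 := by rw [mul_pow, norm_sub_sq_real, hu, hw]; ring

theorem Orthonormal.norm_sum_mul_inner_smul_le {ι : Type*} [Fintype ι] {b : ι → E}
    (hb : Orthonormal ℝ b) {f : ι → ℝ} {M : ℝ} (hM : 0 ≤ M) (hf : ∀ i, |f i| ≤ M) (x : E) :
    ‖∑ i, (f i * ⟪x, b i⟫) • b i‖ ≤ M * ‖x‖ := by
  refine le_of_sq_le_sq ?_ (by positivity)
  calc ‖∑ i, (f i * ⟪x, b i⟫) • b i‖ ^ 2 = ∑ i, f i ^ 2 * ⟪b i, x⟫ ^ 2 := by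
        rw [← real_inner_self_eq_norm_sq, hb.inner_sum]
        simp only [conj_trivial, real_inner_comm x]
        congr! 1; ring
    _ ≤ ∑ i, M ^ 2 * ⟪b i, x⟫ ^ 2 := by
        gcongr ∑ i, ?_ * _ with i
        exact sq_le_sq' (abs_le.mp (hf i)).1 (abs_le.mp (hf i)).2
    _ ≤ M ^ 2 * ‖x‖ ^ 2 := by
        rw [← mul_sum]; gcongr
        simpa only [Real.norm_eq_abs, sq_abs] using hb.sum_inner_products_le x (s := univ)
    _ = (M * ‖x‖) ^ 2 := by ring

end

theorem norm_sum_le_card_filter_mul {F ι : Type*} [SeminormedAddCommGroup F] {s : Finset ι}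
    {f : ι → F} {p : ι → Prop} [DecidablePred p] {C : ℝ} (hzero : ∀ i ∈ s, ¬ p i → f i = 0)
    (hle : ∀ i ∈ s, p i → ‖f i‖ ≤ C) :
    ‖∑ i ∈ s, f i‖ ≤ #(s.filter p) * C := by
  rw [← sum_filter_of_ne fun i hi hne => not_not.mp fun hp => hne (hzero i hi hp)]
  simpa using norm_sum_le_of_le _ fun i hi => hle i (mem_filter.mp hi).1 (mem_filter.mp hi).2

theorem graph_filter_difference_bound_general
    (n : ℕ)
    (Sb Sn : EuclideanSpace ℝ (Fin n) →L[ℝ] EuclideanSpace ℝ (Fin n))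
    (lb lam : Fin n → ℝ)
    (vb v : Fin n → EuclideanSpace ℝ (Fin n))
    (hvb : Orthonormal ℝ vb) (hv : Orthonormal ℝ v)
    (h : ℝ → ℝ) (A₂ c : ℝ)
    (hLip : ∀ x y, |h x - h y| ≤ A₂ * |x - y|)
    (hh_bd : ∀ x : ℝ, |h x| < 1)
    (hh_zero : ∀ x : ℝ, |x| < c → h x = 0)
    (hWeyl : ∀ i, |lb i - lam i| ≤ ‖Sb - Sn‖)
    (δc : ℝ)
    (hDK : ∀ i, c ≤ |lam i / n| → ‖vb i - v i‖ ≤ Real.pi * ‖Sb - Sn‖ / (n * δc))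
    (n_c : ℕ) (hn_c : n_c = (univ.filter fun i => c ≤ |lam i / n|).card) :
    ∀ x : EuclideanSpace ℝ (Fin n),
      ‖(∑ i, h (lb i / n) • (⟪x, vb i⟫ • vb i)) -
        ∑ i, h (lam i / n) • (⟪x, v i⟫ • v i)‖ ≤
      (A₂ + Real.pi * n_c / δc) * (‖Sb - Sn‖ / n) * ‖x‖ := by
  intro x
  set K := ‖Sb - Sn‖
  have hA₂ : 0 ≤ A₂ := by simpa using (abs_nonneg _).trans (hLip 1 0)
  have hsplit : (∑ i, h (lb i / n) • (⟪x, vb i⟫ • vb i)) - ∑ i, h (lam i / n) • (⟪x, v i⟫ • v i) =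
      (∑ i, ((h (lb i / n) - h (lam i / n)) * ⟪x, vb i⟫) • vb i) +
        ∑ i, h (lam i / n) • (⟪x, vb i⟫ • vb i - ⟪x, v i⟫ • v i) := by
    rw [← sum_add_distrib, ← sum_sub_distrib]
    exact sum_congr rfl fun i _ => by module
  have heigenvalues : ‖∑ i, ((h (lb i / n) - h (lam i / n)) * ⟪x, vb i⟫) • vb i‖ ≤
      A₂ * (K / n) * ‖x‖ := by
    refine hvb.norm_sum_mul_inner_smul_le (by positivity) (fun i => ?_) x
    calc |h (lb i / n) - h (lam i / n)| ≤ A₂ * (|lb i - lam i| / n) := by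
          simpa [← sub_div, abs_div] using hLip (lb i / n) (lam i / n)
      _ ≤ A₂ * (K / n) := by gcongr; exact hWeyl i
  have heigenvectors : ‖∑ i, h (lam i / n) • (⟪x, vb i⟫ • vb i - ⟪x, v i⟫ • v i)‖ ≤
      n_c * (Real.pi * K / (n * δc) * ‖x‖) := by
    rw [hn_c]
    refine norm_sum_le_card_filter_mul (fun i _ hi => ?_) (fun i _ hi => ?_)
    · rw [hh_zero _ (not_le.mp hi), zero_smul]
    · calc ‖h (lam i / n) • (⟪x, vb i⟫ • vb i - ⟪x, v i⟫ • v i)‖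
          ≤ 1 * (‖vb i - v i‖ * ‖x‖) := by
            rw [norm_smul]
            gcongr
            · exact (hh_bd _).le
            · exact norm_inner_smul_sub_inner_smul_le (hvb.1 i) (hv.1 i) x
        _ ≤ Real.pi * K / (n * δc) * ‖x‖ := by rw [one_mul]; gcongr; exact hDK i hi
  calc _ ≤ A₂ * (K / n) * ‖x‖ + n_c * (Real.pi * K / (n * δc) * ‖x‖) :=
        hsplit ▸ (norm_add_le _ _).trans (add_le_add heigenvalues heigenvectors)
    _ = (A₂ + Real.pi * n_c / δc) * (K / n) * ‖x‖ := by ring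

/-- Spectral filter difference bound on graphs (finite-dimensional analogue of
graphon filter stability).  `S̄ₙ, Sₙ` are symmetric operators on `ℝⁿ` with
orthonormal eigenpairs `(λ̄ᵢ, v̄ᵢ)` and `(λᵢ, vᵢ)`; `h` is `A₂`-Lipschitz with
`|h| < 1` and `h(λ) = 0` for `|λ| < c`.  Under the Weyl bound
`|λ̄ᵢ − λᵢ| ≤ ‖S̄ₙ − Sₙ‖` and the eigenvector perturbation bound
`‖v̄ᵢ − vᵢ‖ ≤ π‖S̄ₙ − Sₙ‖/(n δ_c)` on the passband, the filter outputs satisfy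
`‖H(S̄ₙ)x − H(Sₙ)x‖ ≤ (A₂ + π n_c/δ_c)(‖S̄ₙ − Sₙ‖/n)‖x‖`, where `n_c` is the
number of eigenvalues `λᵢ` of `Sₙ` with `|λᵢ/n| ≥ c`. -/
theorem graph_filter_difference_bound
    (n : ℕ) (hn : 0 < n)
    (Sb Sn : EuclideanSpace ℝ (Fin n) →L[ℝ] EuclideanSpace ℝ (Fin n))
    (hSb_sa : IsSelfAdjoint Sb) (hSn_sa : IsSelfAdjoint Sn)
    (lb lam : Fin n → ℝ)
    (vb v : Fin n → EuclideanSpace ℝ (Fin n))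
    (hvb : Orthonormal ℝ vb) (hv : Orthonormal ℝ v)
    (heigb : ∀ i, Sb (vb i) = lb i • vb i)
    (heig : ∀ i, Sn (v i) = lam i • v i)
    (h : ℝ → ℝ) (A₂ c : ℝ) (hc : 0 < c)
    (hLip : ∀ x y, |h x - h y| ≤ A₂ * |x - y|)
    (hh_bd : ∀ x : ℝ, |h x| < 1)
    (hh_zero : ∀ x : ℝ, |x| < c → h x = 0)
    (hWeyl : ∀ i, |lb i - lam i| ≤ ‖Sb - Sn‖)
    (δc : ℝ) (hδc : 0 < δc)
    (hDK : ∀ i, c ≤ |lam i / n| → ‖vb i - v i‖ ≤ Real.pi * ‖Sb - Sn‖ / (n * δc))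
    (n_c : ℕ) (hn_c : n_c = (univ.filter fun i => c ≤ |lam i / n|).card) :
    ∀ x : EuclideanSpace ℝ (Fin n),
      ‖(∑ i, h (lb i / n) • (⟪x, vb i⟫ • vb i)) -
        ∑ i, h (lam i / n) • (⟪x, v i⟫ • v i)‖ ≤
      (A₂ + Real.pi * n_c / δc) * (‖Sb - Sn‖ / n) * ‖x‖ :=
  graph_filter_difference_bound_general n Sb Sn lb lam vb v hvb hv h A₂ c hLip hh_bd hh_zero hWeyl
    δc hDK n_c hn_c
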